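/- Suppose (ρ, E) solves the reduced Euler–Poisson system with entropy constant κ > 0 on an interval I ⊂ (0 ≤ t < r0), with ρ > 0 and M(t) ≠ 1 on I. Then for all t ∈ I, (M²)'(t) = (γ+1)·μ(κ)·t̂^{(γ−3)/(γ+1)}·(M²)^{2γ/(γ+1)}/(M² − 1)·( t̂·E − (2(γ−1)/(γ+1))·B ), where μ(κ) := (1/(γκ))·(γκ/m0²)^{(γ−1)/(γ+1)}. In particular, at any point where M < 1 and t̂·E − (2(γ−1)/(γ+1))·B > 0 one has (M²)' < 0, and at any point where M > 1 and t̂·E − (2(γ−1)/(γ+1))·B > 0 one has (M²)' > 0. -/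
import Mathlib


open Real Set

/-- The right-hand side `g1(t, ρ, E, κ)` of the density equation of the reduced
radial Euler–Poisson system (with `t̂ = r0 − t` and mass flux `m0`). -/
noncomputable def g1 (γ r0 m0 κ t ρv Ev : ℝ) : ℝ :=
  ρv * ((r0 - t) * Ev - m0 ^ 2 / ((r0 - t) ^ 2 * ρv ^ 2)) /
    ((r0 - t) * (γ * κ * ρv ^ (γ - 1) - m0 ^ 2 / ((r0 - t) ^ 2 * ρv ^ 2)))

/-- The right-hand side `g2(t, ρ, E) = t̂·(ρ − b(t))` of the electric-field equation. -/
noncomputable def g2 (r0 t ρv bv : ℝ) : ℝ := (r0 - t) * (ρv - bv)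

/-- `(ρ, E)` is a (C¹) solution of the reduced radial Euler–Poisson system with
entropy constant `κ` on the set `I`: `ρ > 0`, `ρ' = g1(t, ρ, E, κ)` and
`(t̂·E)' = g2(t, ρ, E)` on `I`. -/
def EPsol (γ r0 m0 κ : ℝ) (b ρ E : ℝ → ℝ) (I : Set ℝ) : Prop :=
  (∀ t ∈ I, 0 < ρ t) ∧
  (∀ t ∈ I, HasDerivAt ρ (g1 γ r0 m0 κ t (ρ t) (E t)) t) ∧
  (∀ t ∈ I, HasDerivAt (fun s => (r0 - s) * E s) (g2 r0 t (ρ t) (b t)) t)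

/-- The associated velocity `u = m0/(t̂·ρ)`. -/
noncomputable def uA (r0 m0 : ℝ) (ρ : ℝ → ℝ) (t : ℝ) : ℝ := m0 / ((r0 - t) * ρ t)

/-- The associated pressure `p = κ·ρ^γ`. -/
noncomputable def pA (γ κ : ℝ) (ρ : ℝ → ℝ) (t : ℝ) : ℝ := κ * ρ t ^ γ

/-- The associated squared Mach number `M² = ρ·u²/(γ·p)`. -/
noncomputable def MsqA (γ r0 m0 κ : ℝ) (ρ : ℝ → ℝ) (t : ℝ) : ℝ :=
  ρ t * uA r0 m0 ρ t ^ 2 / (γ * pA γ κ ρ t)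

/-- The associated Bernoulli function `B = u²/2 + γ·p/((γ−1)·ρ)`. -/
noncomputable def BA (γ r0 m0 κ : ℝ) (ρ : ℝ → ℝ) (t : ℝ) : ℝ :=
  uA r0 m0 ρ t ^ 2 / 2 + γ * pA γ κ ρ t / ((γ - 1) * ρ t)

/-- pointwise formula for `M²`. -/
lemma msq_eq' (γ r0 m0 κ : ℝ) (ρ : ℝ → ℝ) (s : ℝ) (hR : 0 < ρ s) (hT : r0 - s ≠ 0)
    (hγ : γ ≠ 0) (hκ : κ ≠ 0) :
    MsqA γ r0 m0 κ ρ s = m0^2/(γ*κ) / ((r0-s)^2 * (ρ s ^ γ * ρ s)) := by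
  have hX : ρ s ^ γ ≠ 0 := (Real.rpow_pos_of_pos hR γ).ne'
  simp only [MsqA, uA, pA]
  field_simp

lemma lemA' (γ κ m0 T R X V P : ℝ) (hT : T ≠ 0) (hR : R ≠ 0) (hX : X ≠ 0)
    (hγ : γ ≠ 0) (hκ : κ ≠ 0) (hV : V ≠ 0) :
    (γ+1) * (m0^2/(γ*κ)^2) * (T^3*X^2)⁻¹ / (-V/(γ*κ*T^2*X*R)) * P
      = -((γ+1)*m0^2*R*P) / (γ*κ*T*X*V) := by
  field_simp

lemma lemB' (γ κ m0 T R X V N : ℝ) (hT : T ≠ 0) (hR : R ≠ 0) (hX : X ≠ 0)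
    (hγ : γ ≠ 0) (hκ : κ ≠ 0) (hV : V ≠ 0) :
    (0 * (T^2*(X*R)) - m0^2/(γ*κ) * ((↑(2:ℕ)*T^1*(0-1))*(X*R)
        + T^2*(((N/(T*V))*γ*(X/R))*R + X*(N/(T*V)))))
      / (T^2*(X*R))^2
      = m0^2/(γ*κ) * (2*R*V - (γ+1)*N) / (T^3*X*R^2*V) := by
  field_simp
  ring

lemma lemC' (γ κ m0 T R X Ev : ℝ) (hT : T ≠ 0) (hR : R ≠ 0) (hX : X ≠ 0)
    (hγ : γ ≠ 0) (hκ : κ ≠ 0) (hγ1 : γ + 1 ≠ 0) (hγm1 : γ - 1 ≠ 0)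
    (hV : γ*κ*X*T^2*R - m0^2 ≠ 0) :
    m0^2/(γ*κ) * (2*R*(γ*κ*X*T^2*R - m0^2) - (γ+1)*(T^3*R^3*Ev - R*m0^2))
        / (T^3*X*R^2*(γ*κ*X*T^2*R - m0^2))
      = -((γ+1)*m0^2*R*(T*Ev - 2*(γ-1)/(γ+1)*((m0/(T*R))^2/2 + γ*(κ*X)/((γ-1)*R))))
          / (γ*κ*T*X*(γ*κ*X*T^2*R - m0^2)) := by
  rw [div_eq_div_iff (by exact mul_ne_zero (by positivity) hV)
      (by exact mul_ne_zero (by positivity) hV)]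
  field_simp
  ring

lemma coeff' (γ κ m0 T R X : ℝ) (hγ : 1 < γ) (hκ : 0 < κ)
    (hm0 : 0 < m0) (hT : 0 < T) (hR : 0 < R) (hX : X = R ^ γ) :
    1/(γ*κ) * (γ*κ/m0^2) ^ ((γ-1)/(γ+1)) * T ^ ((γ-3)/(γ+1)) *
      (m0^2/(γ*κ) / (T^2*(X*R))) ^ (2*γ/(γ+1))
    = (m0^2/(γ*κ)^2) * (T^3*X^2)⁻¹ := by
  have hγ0 : (0:ℝ) < γ := by linarith
  have hγ1 : (0:ℝ) < γ + 1 := by linarith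
  have hC : (0:ℝ) < m0^2/(γ*κ) := by positivity
  have hXpos : 0 < X := hX ▸ Real.rpow_pos_of_pos hR γ
  have h1 : γ*κ/m0^2 = (m0^2/(γ*κ))⁻¹ := by rw [inv_div]
  have hXR : X * R = R ^ (γ+1) := by rw [hX, Real.rpow_add_one hR.ne']
  have hT2 : (T^2 : ℝ) = T ^ ((2:ℝ)) := by
    rw [← Real.rpow_natCast T 2]; norm_num
  rw [h1, hXR, hT2, Real.div_rpow hC.le (by positivity),
      Real.mul_rpow (by positivity) (by positivity),
      ← Real.rpow_mul hT.le, ← Real.rpow_mul hR.le,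
      Real.inv_rpow hC.le]
  have e1 : (γ+1) * (2*γ/(γ+1)) = 2*γ := by field_simp
  have e2 : (2:ℝ) * (2*γ/(γ+1)) = 4*γ/(γ+1) := by ring
  rw [e1, e2]
  have hR2γ : R ^ (2*γ) = X^2 := by
    rw [hX, ← Real.rpow_natCast (R^γ) 2, ← Real.rpow_mul hR.le]
    norm_num; ring_nf
  rw [hR2γ]
  rw [div_eq_mul_inv (((m0^2/(γ*κ))) ^ (2*γ/(γ+1))), mul_inv]
  have hTcomb : T ^ ((γ-3)/(γ+1)) * (T ^ (4*γ/(γ+1)))⁻¹ = (T^3)⁻¹ := by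
    rw [← Real.rpow_neg hT.le, ← Real.rpow_add hT]
    have : (γ-3)/(γ+1) + -(4*γ/(γ+1)) = -3 := by field_simp; ring
    rw [this]
    rw [Real.rpow_neg hT.le, ← Real.rpow_natCast T 3]; norm_num
  have hCcomb : ((m0^2/(γ*κ)) ^ ((γ-1)/(γ+1)))⁻¹ * (m0^2/(γ*κ)) ^ (2*γ/(γ+1))
      = m0^2/(γ*κ) := by
    rw [← Real.rpow_neg hC.le, ← Real.rpow_add hC]
    have : -((γ-1)/(γ+1)) + 2*γ/(γ+1) = 1 := by field_simp; ring
    rw [this, Real.rpow_one]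
  rw [show 1/(γ*κ) * ((m0^2/(γ*κ)) ^ ((γ-1)/(γ+1)))⁻¹ * T ^ ((γ-3)/(γ+1)) *
      ((m0^2/(γ*κ)) ^ (2*γ/(γ+1)) * ((T ^ (4*γ/(γ+1)))⁻¹ * (X^2)⁻¹))
    = 1/(γ*κ) * (((m0^2/(γ*κ)) ^ ((γ-1)/(γ+1)))⁻¹ * (m0^2/(γ*κ)) ^ (2*γ/(γ+1))) *
      (T ^ ((γ-3)/(γ+1)) * (T ^ (4*γ/(γ+1)))⁻¹) * (X^2)⁻¹ from by ring,
    hCcomb, hTcomb]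
  have hγκ : γ*κ ≠ 0 := by positivity
  field_simp

/-- Along a solution of the reduced Euler–Poisson system with entropy
constant `κ` on `I ⊆ [0, r0)` with `M ≠ 1`, the squared Mach number satisfies
`(M²)' = (γ+1)·μ(κ)·t̂^{(γ−3)/(γ+1)}·(M²)^{2γ/(γ+1)}/(M²−1)·(t̂E − (2(γ−1)/(γ+1))B)`
with `μ(κ) = (1/(γκ))(γκ/m0²)^{(γ−1)/(γ+1)}`; in particular `(M²)' < 0` where `M < 1`
and `t̂E − (2(γ−1)/(γ+1))B > 0`, and `(M²)' > 0` where `M > 1` and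
`t̂E − (2(γ−1)/(γ+1))B > 0`. -/
theorem stmt5 (γ r0 b0 ρ0 u0 p0 κ : ℝ) (b : ℝ → ℝ)
    (hγ : 1 < γ) (hr0 : 0 < r0) (hb0 : 0 < b0)
    (hbC1 : ContDiffOn ℝ 1 b (Icc 0 r0))
    (hbpos : ∀ t ∈ Icc 0 r0, 0 < b t)
    (hbbd : ∀ t ∈ Icc 0 r0, |b t| ≤ b0 ∧ |derivWithin b (Icc 0 r0) t| ≤ b0)
    (hρ0 : 0 < ρ0) (hu0 : 0 < u0) (hp0 : 0 < p0) (hκ : 0 < κ)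
    (m0 : ℝ) (hm0 : m0 = r0 * ρ0 * u0)
    (I : Set ℝ) (hI : I ⊆ Ico 0 r0)
    (ρ E : ℝ → ℝ) (hsol : EPsol γ r0 m0 κ b ρ E I)
    (hM : ∀ t ∈ I, MsqA γ r0 m0 κ ρ t ≠ 1) :
    ∀ t ∈ I,
      HasDerivAt (MsqA γ r0 m0 κ ρ)
        ((γ + 1) * (1 / (γ * κ) * (γ * κ / m0 ^ 2) ^ ((γ - 1) / (γ + 1))) *
          (r0 - t) ^ ((γ - 3) / (γ + 1)) *
          MsqA γ r0 m0 κ ρ t ^ (2 * γ / (γ + 1)) / (MsqA γ r0 m0 κ ρ t - 1) *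
          ((r0 - t) * E t - 2 * (γ - 1) / (γ + 1) * BA γ r0 m0 κ ρ t)) t ∧
      (MsqA γ r0 m0 κ ρ t < 1 →
        0 < (r0 - t) * E t - 2 * (γ - 1) / (γ + 1) * BA γ r0 m0 κ ρ t →
        deriv (MsqA γ r0 m0 κ ρ) t < 0) ∧
      (1 < MsqA γ r0 m0 κ ρ t →
        0 < (r0 - t) * E t - 2 * (γ - 1) / (γ + 1) * BA γ r0 m0 κ ρ t →
        0 < deriv (MsqA γ r0 m0 κ ρ) t) := by
  intro t ht
  have hγ0 : (0:ℝ) < γ := by linarith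
  have hγ1 : (0:ℝ) < γ + 1 := by linarith
  have hγm1 : γ - 1 ≠ 0 := by intro h; nlinarith
  have hm0pos : 0 < m0 := by rw [hm0]; positivity
  have hT : 0 < r0 - t := by
    have := hI ht; exact sub_pos.2 this.2
  have hR : 0 < ρ t := hsol.1 t ht
  have hX : 0 < ρ t ^ γ := Real.rpow_pos_of_pos hR γ
  have hρ' := hsol.2.1 t ht
  -- nonvanishing of V = γκ X T² R - m0²
  have hVne : γ*κ*(ρ t ^ γ)*(r0-t)^2*(ρ t) - m0^2 ≠ 0 := by
    intro h0
    apply hM t ht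
    rw [msq_eq' γ r0 m0 κ ρ t hR hT.ne' hγ0.ne' hκ.ne']
    rw [div_eq_one_iff_eq (by positivity)]
    have hγκ : γ * κ ≠ 0 := by positivity
    field_simp
    linarith [h0]
  -- rewrite of ρ^(γ-1)
  have hrg : ρ t ^ (γ - 1) = ρ t ^ γ / ρ t := by
    rw [Real.rpow_sub hR, Real.rpow_one]
  -- g1 value in simplified form
  have hg1 : g1 γ r0 m0 κ t (ρ t) (E t)
      = ((r0-t)^3*(ρ t)^3*(E t) - (ρ t)*m0^2) /
        ((r0-t)*(γ*κ*(ρ t ^ γ)*(r0-t)^2*(ρ t) - m0^2)) := by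
    have hw : γ*κ*(ρ t ^ γ / ρ t) - m0^2/((r0-t)^2 * ρ t^2)
        = (γ*κ*(ρ t ^ γ)*(r0-t)^2*(ρ t) - m0^2)/((r0-t)^2*(ρ t)^2) := by
      field_simp
    unfold g1
    rw [hrg, hw, div_eq_div_iff
      (mul_ne_zero hT.ne' (div_ne_zero hVne (by positivity)))
      (mul_ne_zero hT.ne' hVne)]
    field_simp
  -- derivative of the representation  C / ((r0-s)^2 * (ρ s ^ γ * ρ s))
  have hXd : HasDerivAt (fun s => ρ s ^ γ)
      (g1 γ r0 m0 κ t (ρ t) (E t) * γ * ρ t ^ (γ - 1)) t :=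
    hρ'.rpow_const (Or.inl hR.ne')
  have hprod := hXd.mul hρ'
  have hT2d : HasDerivAt (fun s => (r0 - s)^2)
      ((↑(2:ℕ)) * (r0 - t)^(2-1) * (0 - 1)) t :=
    ((hasDerivAt_const t r0).sub (hasDerivAt_id t)).pow 2
  have hgd := hT2d.mul hprod
  have hgne : ((r0-t)^2 * (ρ t ^ γ * ρ t)) ≠ 0 := by positivity
  have hdiv := (hasDerivAt_const t (m0^2/(γ*κ))).div hgd hgne
  -- eventual equality with MsqA
  have h1 : ∀ᶠ s in nhds t, 0 < ρ s := hρ'.continuousAt (Ioi_mem_nhds hR)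
  have h2 : ∀ᶠ s in nhds t, 0 < r0 - s := by
    have hc : ContinuousAt (fun s : ℝ => r0 - s) t :=
      (continuous_const.sub continuous_id).continuousAt
    exact hc (Ioi_mem_nhds hT)
  have heq : MsqA γ r0 m0 κ ρ =ᶠ[nhds t]
      fun s => m0^2/(γ*κ) / ((r0-s)^2 * (ρ s ^ γ * ρ s)) := by
    filter_upwards [h1, h2] with s hs1 hs2
    exact msq_eq' γ r0 m0 κ ρ s hs1 hs2.ne' hγ0.ne' hκ.ne'
  have hMder := hdiv.congr_of_eventuallyEq heq
  -- value of MsqA at t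
  have hMsqt : MsqA γ r0 m0 κ ρ t
      = m0^2/(γ*κ) / ((r0-t)^2 * (ρ t ^ γ * ρ t)) :=
    msq_eq' γ r0 m0 κ ρ t hR hT.ne' hγ0.ne' hκ.ne'
  -- M² - 1 in simplified form
  have hM1 : m0^2/(γ*κ) / ((r0-t)^2 * (ρ t ^ γ * ρ t)) - 1
      = -(γ*κ*(ρ t ^ γ)*(r0-t)^2*(ρ t) - m0^2)/(γ*κ*(r0-t)^2*(ρ t ^ γ)*(ρ t)) := by
    field_simp
    ring
  -- coefficient identity
  have hco2 : (γ+1) * (1/(γ*κ) * (γ*κ/m0^2) ^ ((γ-1)/(γ+1))) *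
      (r0-t) ^ ((γ-3)/(γ+1)) *
      (m0^2/(γ*κ) / ((r0-t)^2*((ρ t ^ γ)*(ρ t)))) ^ (2*γ/(γ+1))
      = (γ+1) * (m0^2/(γ*κ)^2) * ((r0-t)^3*(ρ t ^ γ)^2)⁻¹ := by
    rw [show (γ+1) * (1/(γ*κ) * (γ*κ/m0^2) ^ ((γ-1)/(γ+1))) *
        (r0-t) ^ ((γ-3)/(γ+1)) *
        (m0^2/(γ*κ) / ((r0-t)^2*((ρ t ^ γ)*(ρ t)))) ^ (2*γ/(γ+1))
      = (γ+1) * (1/(γ*κ) * (γ*κ/m0^2) ^ ((γ-1)/(γ+1)) *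
        (r0-t) ^ ((γ-3)/(γ+1)) *
        (m0^2/(γ*κ) / ((r0-t)^2*((ρ t ^ γ)*(ρ t)))) ^ (2*γ/(γ+1))) from by ring,
      coeff' γ κ m0 (r0-t) (ρ t) (ρ t ^ γ) hγ hκ hm0pos hT hR rfl]
    ring
  -- the key computation
  have key : HasDerivAt (MsqA γ r0 m0 κ ρ)
      ((γ + 1) * (1 / (γ * κ) * (γ * κ / m0 ^ 2) ^ ((γ - 1) / (γ + 1))) *
        (r0 - t) ^ ((γ - 3) / (γ + 1)) *
        MsqA γ r0 m0 κ ρ t ^ (2 * γ / (γ + 1)) / (MsqA γ r0 m0 κ ρ t - 1) *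
        ((r0 - t) * E t - 2 * (γ - 1) / (γ + 1) * BA γ r0 m0 κ ρ t)) t := by
    have hkey : (0 * ((r0-t)^2 * (ρ t ^ γ * ρ t)) - m0^2/(γ*κ) *
        (((↑(2:ℕ)) * (r0 - t)^(2-1) * (0 - 1)) * (ρ t ^ γ * ρ t)
          + (r0-t)^2 * ((g1 γ r0 m0 κ t (ρ t) (E t) * γ * ρ t ^ (γ - 1)) * ρ t
            + ρ t ^ γ * g1 γ r0 m0 κ t (ρ t) (E t))))
        / ((r0-t)^2 * (ρ t ^ γ * ρ t))^2
      = (γ + 1) * (1 / (γ * κ) * (γ * κ / m0 ^ 2) ^ ((γ - 1) / (γ + 1))) *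
        (r0 - t) ^ ((γ - 3) / (γ + 1)) *
        MsqA γ r0 m0 κ ρ t ^ (2 * γ / (γ + 1)) / (MsqA γ r0 m0 κ ρ t - 1) *
        ((r0 - t) * E t - 2 * (γ - 1) / (γ + 1) * BA γ r0 m0 κ ρ t) := by
      rw [hMsqt, hg1, hrg]
      simp only [BA, uA, pA]
      calc (0 * ((r0-t)^2 * (ρ t ^ γ * ρ t)) - m0^2/(γ*κ) *
            (((↑(2:ℕ)) * (r0 - t)^1 * (0 - 1)) * (ρ t ^ γ * ρ t)
              + (r0-t)^2 * (((((r0-t)^3*(ρ t)^3*(E t) - (ρ t)*m0^2) /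
                  ((r0-t)*(γ*κ*(ρ t ^ γ)*(r0-t)^2*(ρ t) - m0^2))) * γ * (ρ t ^ γ / ρ t)) * ρ t
                + ρ t ^ γ * (((r0-t)^3*(ρ t)^3*(E t) - (ρ t)*m0^2) /
                  ((r0-t)*(γ*κ*(ρ t ^ γ)*(r0-t)^2*(ρ t) - m0^2))))))
            / ((r0-t)^2 * (ρ t ^ γ * ρ t))^2
          = m0^2/(γ*κ) * (2*(ρ t)*(γ*κ*(ρ t ^ γ)*(r0-t)^2*(ρ t) - m0^2)
              - (γ+1)*((r0-t)^3*(ρ t)^3*(E t) - (ρ t)*m0^2))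
              / ((r0-t)^3*(ρ t ^ γ)*(ρ t)^2*(γ*κ*(ρ t ^ γ)*(r0-t)^2*(ρ t) - m0^2)) := by
            exact lemB' γ κ m0 (r0-t) (ρ t) (ρ t ^ γ)
              (γ*κ*(ρ t ^ γ)*(r0-t)^2*(ρ t) - m0^2)
              ((r0-t)^3*(ρ t)^3*(E t) - (ρ t)*m0^2)
              hT.ne' hR.ne' hX.ne' hγ0.ne' hκ.ne' hVne
        _ = -((γ+1)*m0^2*(ρ t)*((r0-t)*(E t) - 2*(γ-1)/(γ+1)*((m0/((r0-t)*(ρ t)))^2/2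
              + γ*(κ*(ρ t ^ γ))/((γ-1)*(ρ t)))))
              / (γ*κ*(r0-t)*(ρ t ^ γ)*(γ*κ*(ρ t ^ γ)*(r0-t)^2*(ρ t) - m0^2)) := by
            have := lemC' γ κ m0 (r0-t) (ρ t) (ρ t ^ γ) (E t)
              hT.ne' hR.ne' hX.ne' hγ0.ne' hκ.ne' hγ1.ne' hγm1 ?_
            · convert this using 3 <;> ring
            · convert hVne using 2 <;> ring
        _ = (γ+1) * (m0^2/(γ*κ)^2) * ((r0-t)^3*(ρ t ^ γ)^2)⁻¹ /
              (-(γ*κ*(ρ t ^ γ)*(r0-t)^2*(ρ t) - m0^2)/(γ*κ*(r0-t)^2*(ρ t ^ γ)*(ρ t))) *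
              ((r0-t)*(E t) - 2*(γ-1)/(γ+1)*((m0/((r0-t)*(ρ t)))^2/2
                + γ*(κ*(ρ t ^ γ))/((γ-1)*(ρ t)))) := by
            have := (lemA' γ κ m0 (r0-t) (ρ t) (ρ t ^ γ)
              (γ*κ*(ρ t ^ γ)*(r0-t)^2*(ρ t) - m0^2)
              ((r0-t)*(E t) - 2*(γ-1)/(γ+1)*((m0/((r0-t)*(ρ t)))^2/2
                + γ*(κ*(ρ t ^ γ))/((γ-1)*(ρ t))))
              hT.ne' hR.ne' hX.ne' hγ0.ne' hκ.ne' hVne).symm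
            convert this using 2 <;> ring
        _ = (γ + 1) * (1 / (γ * κ) * (γ * κ / m0 ^ 2) ^ ((γ - 1) / (γ + 1))) *
              (r0 - t) ^ ((γ - 3) / (γ + 1)) *
              (m0^2/(γ*κ) / ((r0-t)^2 * (ρ t ^ γ * ρ t))) ^ (2 * γ / (γ + 1)) /
              (m0^2/(γ*κ) / ((r0-t)^2 * (ρ t ^ γ * ρ t)) - 1) *
              ((r0 - t) * E t - 2 * (γ - 1) / (γ + 1) * ((m0/((r0-t)*(ρ t)))^2/2
                + γ*(κ*(ρ t ^ γ))/((γ-1)*(ρ t)))) := by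
            rw [hM1]
            rw [show (m0^2/(γ*κ) / ((r0-t)^2 * (ρ t ^ γ * ρ t))) ^ (2 * γ / (γ + 1))
              = (m0^2/(γ*κ) / ((r0-t)^2*((ρ t ^ γ)*(ρ t)))) ^ (2 * γ / (γ + 1)) from rfl]
            rw [hco2]
    rw [← hkey]
    exact hMder
  refine ⟨key, ?_, ?_⟩
  · intro hlt hS
    rw [key.deriv]
    have hMpos : 0 < MsqA γ r0 m0 κ ρ t := by
      rw [hMsqt]; positivity
    have hQ : 0 < (γ + 1) * (1 / (γ * κ) * (γ * κ / m0 ^ 2) ^ ((γ - 1) / (γ + 1))) *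
        (r0 - t) ^ ((γ - 3) / (γ + 1)) * MsqA γ r0 m0 κ ρ t ^ (2 * γ / (γ + 1)) := by
      have h1 : (0:ℝ) < (γ * κ / m0 ^ 2) ^ ((γ - 1) / (γ + 1)) :=
        Real.rpow_pos_of_pos (by positivity) _
      have h2 : (0:ℝ) < (r0 - t) ^ ((γ - 3) / (γ + 1)) :=
        Real.rpow_pos_of_pos hT _
      have h3 : (0:ℝ) < MsqA γ r0 m0 κ ρ t ^ (2 * γ / (γ + 1)) :=
        Real.rpow_pos_of_pos hMpos _
      positivity
    have hneg : (γ + 1) * (1 / (γ * κ) * (γ * κ / m0 ^ 2) ^ ((γ - 1) / (γ + 1))) *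
        (r0 - t) ^ ((γ - 3) / (γ + 1)) * MsqA γ r0 m0 κ ρ t ^ (2 * γ / (γ + 1)) /
        (MsqA γ r0 m0 κ ρ t - 1) < 0 :=
      div_neg_of_pos_of_neg hQ (by linarith)
    exact mul_neg_of_neg_of_pos hneg hS
  · intro hgt hS
    rw [key.deriv]
    have hMpos : 0 < MsqA γ r0 m0 κ ρ t := by
      rw [hMsqt]; positivity
    have hQ : 0 < (γ + 1) * (1 / (γ * κ) * (γ * κ / m0 ^ 2) ^ ((γ - 1) / (γ + 1))) *
        (r0 - t) ^ ((γ - 3) / (γ + 1)) * MsqA γ r0 m0 κ ρ t ^ (2 * γ / (γ + 1)) := by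
      have h1 : (0:ℝ) < (γ * κ / m0 ^ 2) ^ ((γ - 1) / (γ + 1)) :=
        Real.rpow_pos_of_pos (by positivity) _
      have h2 : (0:ℝ) < (r0 - t) ^ ((γ - 3) / (γ + 1)) :=
        Real.rpow_pos_of_pos hT _
      have h3 : (0:ℝ) < MsqA γ r0 m0 κ ρ t ^ (2 * γ / (γ + 1)) :=
        Real.rpow_pos_of_pos hMpos _
      positivity
    have hpos : 0 < (γ + 1) * (1 / (γ * κ) * (γ * κ / m0 ^ 2) ^ ((γ - 1) / (γ + 1))) *
        (r0 - t) ^ ((γ - 3) / (γ + 1)) * MsqA γ r0 m0 κ ρ t ^ (2 * γ / (γ + 1)) /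
        (MsqA γ r0 m0 κ ρ t - 1) :=
      div_pos hQ (by linarith)
    exact mul_pos hpos hS
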